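/- Let G be a compact topological group acting on ℝⁿ via a continuous homomorphism ρ : G → GL(n,ℝ). Let f : ℝⁿ → ℝ be continuous and G-invariant, let K ⊆ ℝⁿ be compact, and let ε > 0. Then there exists a C^∞ function g : ℝⁿ → ℝ which is G-invariant (g(ρ(a)x) = g(x) for all a ∈ G, x ∈ ℝⁿ) and satisfies |g(x) − f(x)| ≤ ε for all x ∈ K. -/

import Mathlib

open Matrix MeasureTheory MvPolynomial TopologicalSpace

section Helpers
open MvPolynomial

theorem exists_poly_near' {n : ℕ} (f : (Fin n → ℝ) → ℝ) (hf : Continuous f)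
    (K : Set (Fin n → ℝ)) (hK : IsCompact K) (ε : ℝ) (hε : 0 < ε) :
    ∃ p : MvPolynomial (Fin n) ℝ, ∀ y ∈ K, |eval y p - f y| < ε := by
  haveI : CompactSpace K := isCompact_iff_compactSpace.mp hK
  let Φ : MvPolynomial (Fin n) ℝ →ₐ[ℝ] C(K, ℝ) :=
    MvPolynomial.aeval fun i => (⟨fun x : K => (x : Fin n → ℝ) i,
      (continuous_apply i).comp continuous_subtype_val⟩ : C(K, ℝ))
  have hΦ : ∀ (p : MvPolynomial (Fin n) ℝ) (x : K), Φ p x = eval (x : Fin n → ℝ) p := by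
    intro p
    induction p using MvPolynomial.induction_on with
    | C c => intro x; simp [Φ, aeval_C, _root_.algebraMap_apply]
    | add p q hp hq => intro x; simp [_root_.map_add, hp x, hq x]
    | mul_X p i hp => intro x; simp [_root_.map_mul, aeval_X, hp x, Φ]
  have hsep : (Φ.range : Subalgebra ℝ C(K, ℝ)).SeparatesPoints := by
    intro x y hxy
    have : ∃ i, (x : Fin n → ℝ) i ≠ (y : Fin n → ℝ) i := by
      by_contra h
      push_neg at h
      exact hxy (Subtype.ext (funext h))
    obtain ⟨i, hi⟩ := this
    exact ⟨Φ (X i), Set.mem_image_of_mem _ ⟨(X i : MvPolynomial (Fin n) ℝ), rfl⟩,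
      by simpa [hΦ, eval_X] using hi⟩
  obtain ⟨⟨g₀, hg₀⟩, hnear⟩ :=
    ContinuousMap.exists_mem_subalgebra_near_continuous_of_separatesPoints Φ.range hsep
      (fun x : K => f x) (hf.comp continuous_subtype_val) ε hε
  obtain ⟨p, rfl⟩ := hg₀
  refine ⟨p, fun y hy => ?_⟩
  have h2 := hnear ⟨y, hy⟩
  have h3 : (Φ p) ⟨y, hy⟩ = eval y p := hΦ p ⟨y, hy⟩
  rw [show ((⟨Φ.toRingHom p, by exact ⟨p, rfl⟩⟩ : Φ.range) : C(K,ℝ)) = Φ p from rfl] at h2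
  rw [h3] at h2
  simpa [Real.norm_eq_abs] using h2

variable {n : ℕ}

noncomputable def Psi : MvPolynomial (Fin n) ℝ →+* MvPolynomial (Fin n) (MvPolynomial (Fin n × Fin n) ℝ) :=
  eval₂Hom (C.comp C) (fun i => ∑ j, C (X (i, j)) * X j)

noncomputable def qq (p : MvPolynomial (Fin n) ℝ) (A : Matrix (Fin n) (Fin n) ℝ) :
    MvPolynomial (Fin n) ℝ :=
  map (eval fun ij : Fin n × Fin n => A ij.1 ij.2) (Psi p)

theorem eval_qq (p : MvPolynomial (Fin n) ℝ) (A : Matrix (Fin n) (Fin n) ℝ) (x : Fin n → ℝ) :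
    eval x (qq p A) = eval (A *ᵥ x) p := by
  have : ((eval x).comp ((map (eval fun ij : Fin n × Fin n => A ij.1 ij.2)).comp Psi))
      = (eval (A *ᵥ x) : MvPolynomial (Fin n) ℝ →+* ℝ) := by
    apply MvPolynomial.ringHom_ext
    · intro c; simp [Psi]
    · intro i
      simp [Psi, Matrix.mulVec, dotProduct, map_sum]
  exact RingHom.congr_fun this p

theorem coeff_qq (p : MvPolynomial (Fin n) ℝ) (A : Matrix (Fin n) (Fin n) ℝ) (m : Fin n →₀ ℕ) :
    coeff m (qq p A) = eval (fun ij : Fin n × Fin n => A ij.1 ij.2) (coeff m (Psi p)) :=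
  coeff_map _ _ _

theorem support_qq (p : MvPolynomial (Fin n) ℝ) (A : Matrix (Fin n) (Fin n) ℝ) :
    (qq p A).support ⊆ (Psi p).support := support_map_subset _ _

theorem continuous_coeff_qq (p : MvPolynomial (Fin n) ℝ) (m : Fin n →₀ ℕ) :
    Continuous fun A : Matrix (Fin n) (Fin n) ℝ => coeff m (qq p A) := by
  simp only [coeff_qq]
  exact (MvPolynomial.continuous_eval _).comp
    (continuous_pi fun ij => (continuous_apply ij.2).comp (continuous_apply ij.1))

theorem contDiff_eval_mvpoly (Q : MvPolynomial (Fin n) ℝ) :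
    ContDiff ℝ (⊤ : ℕ∞) fun x : Fin n → ℝ => eval x Q := by
  have h := AnalyticOnNhd.eval_continuousLinearMap
    (ContinuousLinearMap.id ℝ (Fin n → ℝ)) Q
  rw [contDiff_iff_contDiffAt]
  intro x
  exact (h x (Set.mem_univ x)).contDiffAt

theorem continuous_mulVec_pair :
    Continuous fun pr : Matrix (Fin n) (Fin n) ℝ × (Fin n → ℝ) => pr.1 *ᵥ pr.2 := by
  apply continuous_pi; intro i
  simp only [Matrix.mulVec, dotProduct]
  exact continuous_finset_sum _ fun j _ =>
    ((continuous_apply _).comp ((continuous_apply i).comp continuous_fst)).mul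
      ((continuous_apply j).comp continuous_snd)

end Helpers

/-- Let `G` be a compact topological group acting on `ℝⁿ` via a
continuous homomorphism `ρ : G → GL(n, ℝ)`.  Let `f : ℝⁿ → ℝ` be continuous and
`G`-invariant, let `K ⊆ ℝⁿ` be compact, and let `ε > 0`.  Then there exists a
`C^∞` function `g : ℝⁿ → ℝ` which is `G`-invariant and satisfies
`|g x − f x| ≤ ε` for all `x ∈ K`. -/
theorem exists_smooth_invariant_approximation
    {G : Type*} [Group G] [TopologicalSpace G] [IsTopologicalGroup G] [CompactSpace G]
    {n : ℕ} (ρ : G →* Matrix.GeneralLinearGroup (Fin n) ℝ)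
    (hρ : Continuous fun g : G => ((ρ g : Matrix (Fin n) (Fin n) ℝ)))
    (f : (Fin n → ℝ) → ℝ) (hf : Continuous f)
    (hinv : ∀ (a : G) (x : Fin n → ℝ), f ((ρ a : Matrix (Fin n) (Fin n) ℝ) *ᵥ x) = f x)
    (K : Set (Fin n → ℝ)) (hK : IsCompact K)
    (ε : ℝ) (hε : 0 < ε) :
    ∃ g : (Fin n → ℝ) → ℝ, ContDiff ℝ (⊤ : ℕ∞) g ∧
      (∀ (a : G) (x : Fin n → ℝ), g ((ρ a : Matrix (Fin n) (Fin n) ℝ) *ᵥ x) = g x) ∧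
      ∀ x ∈ K, |g x - f x| ≤ ε := by
  classical
  -- continuity of ρ into GL
  have hρ' : Continuous fun a : G => (ρ a : Matrix.GeneralLinearGroup (Fin n) ℝ) := by
    rw [Units.continuous_iff]
    refine ⟨hρ, ?_⟩
    have : (fun a : G => (((ρ a)⁻¹ : Matrix.GeneralLinearGroup (Fin n) ℝ) :
        Matrix (Fin n) (Fin n) ℝ)) = fun a : G => ((ρ a⁻¹ : Matrix.GeneralLinearGroup (Fin n) ℝ) :
        Matrix (Fin n) (Fin n) ℝ) := by
      funext a; rw [← map_inv]
    rw [this]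
    exact hρ.comp continuous_inv
  set H := ρ.range with hHdef
  haveI : CompactSpace H := by
    apply isCompact_iff_compactSpace.mp
    have : (H : Set (Matrix.GeneralLinearGroup (Fin n) ℝ)) = Set.range fun a : G => ρ a := by
      ext u; simp [hHdef, MonoidHom.mem_range, Set.mem_range, eq_comm]
    rw [this]
    exact isCompact_range hρ'
  haveI : Nonempty H := ⟨1⟩
  letI : MeasurableSpace H := borel H
  haveI : BorelSpace H := ⟨rfl⟩
  let K₀ : PositiveCompacts H := ⟨⟨Set.univ, isCompact_univ⟩, by
    rw [interior_univ]; exact Set.univ_nonempty⟩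
  let μ : Measure H := Measure.haarMeasure K₀
  haveI : IsProbabilityMeasure μ := ⟨by
    have : (Set.univ : Set H) = (K₀ : Set H) := rfl
    rw [this]
    exact Measure.haarMeasure_self⟩
  -- matrix of an element of H
  let M : H → Matrix (Fin n) (Fin n) ℝ := fun a =>
    ((a : Matrix.GeneralLinearGroup (Fin n) ℝ) : Matrix (Fin n) (Fin n) ℝ)
  have hM : Continuous M := Units.continuous_val.comp continuous_subtype_val
  have hMinv : Continuous fun a : H => M a⁻¹ := hM.comp continuous_inv
  have hMmul : ∀ a b : H, M (a * b) = M a * M b := fun a b => rfl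
  have hMone : M 1 = 1 := rfl
  -- the compact set of all translates
  let K' : Set (Fin n → ℝ) := (fun pr : H × (Fin n → ℝ) => M pr.1⁻¹ *ᵥ pr.2) '' (Set.univ ×ˢ K)
  have hK' : IsCompact K' := (isCompact_univ.prod hK).image
    (continuous_mulVec_pair.comp ((hMinv.comp continuous_fst).prodMk continuous_snd))
  -- invariance of f under H
  have hfinv : ∀ (a : H) (y : Fin n → ℝ), f (M a *ᵥ y) = f y := by
    rintro ⟨-, b, rfl⟩ y
    exact hinv b y
  -- polynomial approximation on K'
  obtain ⟨p, hp⟩ := exists_poly_near' f hf K' hK' ε hε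
  -- integrand
  let F : H → (Fin n → ℝ) → ℝ := fun a x => eval (M a⁻¹ *ᵥ x) p
  have hFcont : ∀ x, Continuous fun a => F a x :=
    fun x => (MvPolynomial.continuous_eval p).comp
      (continuous_mulVec_pair.comp (hMinv.prodMk continuous_const))
  -- integrability of continuous functions on H
  have hint : ∀ φ : H → ℝ, Continuous φ → Integrable φ μ := by
    intro φ hφ
    exact hφ.integrable_of_hasCompactSupport ((isClosed_tsupport φ).isCompact)
  -- the averaged polynomial
  let T := (Psi (n := n) p).support
  let Q : MvPolynomial (Fin n) ℝ :=
    ∑ m ∈ T, monomial m (∫ a, coeff m (qq p (M a⁻¹)) ∂μ)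
  -- key identity
  have hE : ∀ x : Fin n → ℝ, eval x Q = ∫ a, F a x ∂μ := by
    intro x
    have hsum : ∀ A : Matrix (Fin n) (Fin n) ℝ,
        eval x (qq p A) = ∑ m ∈ T, coeff m (qq p A) * (m.prod fun i k => x i ^ k) := by
      intro A
      conv_lhs => rw [← (qq p A).support_sum_monomial_coeff]
      rw [map_sum]
      rw [Finset.sum_subset (support_qq p A)]
      · exact Finset.sum_congr rfl fun m _ => eval_monomial
      · intro m _ hm
        rw [notMem_support_iff.mp hm, monomial_zero, map_zero]
    have : ∀ a : H, F a x = ∑ m ∈ T, coeff m (qq p (M a⁻¹)) * (m.prod fun i k => x i ^ k) := by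
      intro a
      show eval (M a⁻¹ *ᵥ x) p = _
      rw [← eval_qq p (M a⁻¹) x]
      exact hsum (M a⁻¹)
    simp_rw [this]
    rw [integral_finset_sum]
    · rw [map_sum]
      refine Finset.sum_congr rfl fun m _ => ?_
      rw [eval_monomial, integral_mul_const]
    · intro m _
      exact ((continuous_coeff_qq p m).comp hMinv).mul continuous_const |> hint _
  refine ⟨fun x => eval x Q, contDiff_eval_mvpoly Q, ?_, ?_⟩
  · -- invariance
    intro a₀ x
    have hb : (ρ a₀) ∈ H := ⟨a₀, rfl⟩
    set b : H := ⟨ρ a₀, hb⟩ with hbdef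
    have hNb : M b = ((ρ a₀ : Matrix.GeneralLinearGroup (Fin n) ℝ) : Matrix (Fin n) (Fin n) ℝ) := rfl
    show eval ((ρ a₀ : Matrix (Fin n) (Fin n) ℝ) *ᵥ x) Q = eval x Q
    rw [hE, hE]
    have key := integral_mul_left_eq_self (μ := μ)
      (fun a : H => eval ((M a⁻¹ * M b) *ᵥ x) p) b
    have h1 : ∀ a : H, eval ((M (b * a)⁻¹ * M b) *ᵥ x) p = F a x := by
      intro a
      have : M (b * a)⁻¹ * M b = M a⁻¹ := by
        rw [_root_.mul_inv_rev, hMmul, mul_assoc, ← hMmul, inv_mul_cancel, hMone, mul_one]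
      rw [this]
    have h2 : ∀ a : H, F a (M b *ᵥ x) = eval ((M a⁻¹ * M b) *ᵥ x) p := by
      intro a
      simp only [F, Matrix.mulVec_mulVec]
    calc ∫ a, F a ((ρ a₀ : Matrix (Fin n) (Fin n) ℝ) *ᵥ x) ∂μ
        = ∫ a, eval ((M a⁻¹ * M b) *ᵥ x) p ∂μ := by
          refine integral_congr_ae (Filter.Eventually.of_forall fun a => ?_)
          rw [← hNb]; exact h2 a
      _ = ∫ a, eval ((M (b * a)⁻¹ * M b) *ᵥ x) p ∂μ := key.symm
      _ = ∫ a, F a x ∂μ := by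
          refine integral_congr_ae (Filter.Eventually.of_forall fun a => ?_)
          exact h1 a
  · -- approximation
    intro x hx
    show |eval x Q - f x| ≤ ε
    rw [hE]
    have hfx : f x = ∫ _a, f x ∂μ := by
      rw [integral_const, probReal_univ, one_smul]
    rw [hfx, ← integral_sub (hint _ (hFcont x)) (integrable_const _)]
    have hker : ∀ a : H, ‖F a x - f x‖ ≤ ε := by
      intro a
      have hmem : M a⁻¹ *ᵥ x ∈ K' := ⟨(a, x), ⟨Set.mem_univ a, hx⟩, rfl⟩
      have hfx2 : f (M a⁻¹ *ᵥ x) = f x := hfinv a⁻¹ x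
      rw [Real.norm_eq_abs]
      calc |F a x - f x| = |eval (M a⁻¹ *ᵥ x) p - f (M a⁻¹ *ᵥ x)| := by rw [hfx2]
        _ ≤ ε := (hp _ hmem).le
    calc ‖∫ a, (F a x - f x) ∂μ‖ ≤ ε * (μ Set.univ).toReal :=
          norm_integral_le_of_norm_le_const (Filter.Eventually.of_forall hker)
      _ = ε := by rw [measure_univ, ENNReal.toReal_one, mul_one]
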